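/- arXiv:2605.04053 — 2 statements merged into one kernel-verified Lean document; each statement's English description precedes it below -/
import Mathlib

section
/- Let R = S × T be a direct product of rings. If R is a strongly right C4*-ring, then both S and T are strongly right C4*-rings. -/
open MulOpposite

section C4Defs

/-- A submodule is a direct summand if it has a complement. -/
def IsDirectSummand {R M : Type*} [Ring R] [AddCommGroup M] [Module R M]
    (A : Submodule R M) : Prop :=
  ∃ B : Submodule R M, IsCompl A B

/-- `M` is a `C4`-module over `R`: for every internal direct sum decomposition `M = A ⊕ B`
and every homomorphism `f : A → B` whose kernel is a direct summand of `A`, the image of `f`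
is a direct summand of `B`. -/
def IsC4Module (R M : Type*) [Ring R] [AddCommGroup M] [Module R M] : Prop :=
  ∀ A B : Submodule R M, IsCompl A B → ∀ f : A →ₗ[R] B,
    IsDirectSummand (LinearMap.ker f) → IsDirectSummand (LinearMap.range f)

/-- `M` is a `C4*`-module: every submodule of `M` is a `C4`-module. -/
def IsC4StarModule (R M : Type*) [Ring R] [AddCommGroup M] [Module R M] : Prop :=
  ∀ N : Submodule R M, IsC4Module R N

/-- `M` is square-free: no nonzero submodules `A`, `B` with `A ⊓ B = ⊥` and `A ≅ B`. -/
def IsSquareFreeModule (R M : Type*) [Ring R] [AddCommGroup M] [Module R M] : Prop :=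
  ∀ A B : Submodule R M, A ≠ ⊥ → B ≠ ⊥ → A ⊓ B = ⊥ → IsEmpty (A ≃ₗ[R] B)

/-- `M` is summand-square-free: no nonzero direct summands `A`, `B` with `A ⊓ B = ⊥`
and `A ≅ B`. -/
def IsSummandSquareFree (R M : Type*) [Ring R] [AddCommGroup M] [Module R M] : Prop :=
  ∀ A B : Submodule R M, IsDirectSummand A → IsDirectSummand B →
    A ≠ ⊥ → B ≠ ⊥ → A ⊓ B = ⊥ → IsEmpty (A ≃ₗ[R] B)

/-- `X` is an essential submodule of `A`. -/
def IsEssentialIn {R M : Type*} [Ring R] [AddCommGroup M] [Module R M]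
    (X A : Submodule R M) : Prop :=
  X ≤ A ∧ ∀ N : Submodule R M, N ≤ A → N ≠ ⊥ → X ⊓ N ≠ ⊥

/-- A triple `(X, Y, f)` where `X`, `Y` are semisimple direct summands of `M` with
`X ⊓ Y = ⊥` and `f : X ≅ Y` an isomorphism.  These are the elements of the poset `S(M)`
from the definition of semi-weak-CS modules. -/
structure SWTriple (R M : Type*) [Ring R] [AddCommGroup M] [Module R M] where
  X : Submodule R M
  Y : Submodule R M
  semisimpleX : IsSemisimpleModule R X
  semisimpleY : IsSemisimpleModule R Y
  summandX : IsDirectSummand X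
  summandY : IsDirectSummand Y
  disj : X ⊓ Y = ⊥
  f : X ≃ₗ[R] Y

/-- The extension order on the poset `S(M)` of triples: `(X₁,Y₁,f₁) ≤ (X₂,Y₂,f₂)` iff
`X₁ ≤ X₂`, `Y₁ ≤ Y₂` and `f₂` restricts to `f₁` on `X₁`. -/
def SWTriple.Extends {R M : Type*} [Ring R] [AddCommGroup M] [Module R M]
    (t s : SWTriple R M) : Prop :=
  ∃ hX : t.X ≤ s.X, t.Y ≤ s.Y ∧
    ∀ x : t.X, (s.f ⟨x.1, hX x.2⟩ : M) = (t.f x : M)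

/-- `M` is semi-weak-CS: for every chain in the poset `S(M)`, with `X` the union of the first
components and `Y` the union of the second components, there are direct summands `A`, `B`
of `M` with `X` essential in `A` and `Y` essential in `B`. -/
def IsSemiWeakCS (R M : Type*) [Ring R] [AddCommGroup M] [Module R M] : Prop :=
  ∀ C : Set (SWTriple R M), IsChain SWTriple.Extends C →
    ∃ A B : Submodule R M, IsDirectSummand A ∧ IsDirectSummand B ∧
      IsEssentialIn (⨆ t ∈ C, t.X) A ∧ IsEssentialIn (⨆ t ∈ C, t.Y) B

/-- `M` is strongly `C4*` if it is both semi-weak-CS and `C4*`. -/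
def IsStronglyC4StarModule (R M : Type*) [Ring R] [AddCommGroup M] [Module R M] : Prop :=
  IsSemiWeakCS R M ∧ IsC4StarModule R M

/-- `R` is a right `C4*`-ring: the right regular module `R_R` (i.e. `R` as a module over
`Rᵐᵒᵖ`) is a `C4*`-module. -/
def IsRightC4StarRing (R : Type*) [Ring R] : Prop := IsC4StarModule Rᵐᵒᵖ R

/-- `R` is a left `C4*`-ring: the left regular module `_RR` is a `C4*`-module. -/
def IsLeftC4StarRing (R : Type*) [Ring R] : Prop := IsC4StarModule R R

/-- `R` is a strongly right `C4*`-ring. -/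
def IsStronglyRightC4StarRing (R : Type*) [Ring R] : Prop := IsStronglyC4StarModule Rᵐᵒᵖ R

/-- `R` is a strongly left `C4*`-ring. -/
def IsStronglyLeftC4StarRing (R : Type*) [Ring R] : Prop := IsStronglyC4StarModule R R

/-- `R` is right semi-weak-CS. -/
def IsRightSemiWeakCSRing (R : Type*) [Ring R] : Prop := IsSemiWeakCS Rᵐᵒᵖ R

/-- `R` is left semi-weak-CS. -/
def IsLeftSemiWeakCSRing (R : Type*) [Ring R] : Prop := IsSemiWeakCS R R

/-- The left square-free transfer condition `LSF`: if the right regular module `T_T` is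
summand-square-free then the left regular module `_TT` is square-free. -/
def LSF (T : Type*) [Ring T] : Prop :=
  IsSummandSquareFree Tᵐᵒᵖ T → IsSquareFreeModule T T

end C4Defs

section Corner

variable {T : Type*} [Ring T]

/-- The corner `eTe = {x : T | e * x = x ∧ x * e = x}` as a non-unital subring. -/
def cornerSubring (e : T) : NonUnitalSubring T where
  carrier := {x : T | e * x = x ∧ x * e = x}
  add_mem' := by
    rintro a b ⟨ha1, ha2⟩ ⟨hb1, hb2⟩
    exact ⟨by rw [mul_add, ha1, hb1], by rw [add_mul, ha2, hb2]⟩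
  zero_mem' := ⟨mul_zero e, zero_mul e⟩
  neg_mem' := by
    rintro a ⟨ha1, ha2⟩
    exact ⟨by rw [mul_neg, ha1], by rw [neg_mul, ha2]⟩
  mul_mem' := by
    rintro a b ⟨ha1, ha2⟩ ⟨hb1, hb2⟩
    exact ⟨by rw [← mul_assoc, ha1], by rw [mul_assoc, hb2]⟩

theorem mem_cornerSubring {e x : T} :
    x ∈ cornerSubring e ↔ e * x = x ∧ x * e = x := Iff.rfl

/-- The corner ring `eTe` associated to an idempotent `e` of `T`; its identity is `e`. -/
def Corner (e : T) (he : IsIdempotentElem e) : Type _ := ↥(cornerSubring e)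

instance {e : T} {he : IsIdempotentElem e} : Ring (Corner e he) :=
  { (inferInstance : NonUnitalRing ↥(cornerSubring e)) with
    one := ⟨e, he, he⟩
    one_mul := fun x => Subtype.ext (mem_cornerSubring.mp x.2).1
    mul_one := fun x => Subtype.ext (mem_cornerSubring.mp x.2).2 }

/-- `eT = {x : T | e * x = x}` as an additive subgroup; it is a left module over the
corner ring `eTe`. -/
def leftPart (e : T) : AddSubgroup T where
  carrier := {x : T | e * x = x}
  add_mem' := by
    intro a b ha hb
    simp only [Set.mem_setOf_eq] at *
    rw [mul_add, ha, hb]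
  zero_mem' := mul_zero e
  neg_mem' := by
    intro a ha
    simp only [Set.mem_setOf_eq] at *
    rw [mul_neg, ha]

/-- `Te = {x : T | x * e = x}` as an additive subgroup; it is a right module over the
corner ring `eTe`. -/
def rightPart (e : T) : AddSubgroup T where
  carrier := {x : T | x * e = x}
  add_mem' := by
    intro a b ha hb
    simp only [Set.mem_setOf_eq] at *
    rw [add_mul, ha, hb]
  zero_mem' := zero_mul e
  neg_mem' := by
    intro a ha
    simp only [Set.mem_setOf_eq] at *
    rw [neg_mul, ha]

theorem mem_leftPart {e x : T} : x ∈ leftPart e ↔ e * x = x := Iff.rfl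

theorem mem_rightPart {e x : T} : x ∈ rightPart e ↔ x * e = x := Iff.rfl

/-- `eT` is a (unital) left module over the corner ring `eTe`. -/
instance {e : T} {he : IsIdempotentElem e} : Module (Corner e he) ↥(leftPart e) where
  smul c x := ⟨c.1 * x.1, by
    have h1 : e * c.1 = c.1 := (mem_cornerSubring.mp c.2).1
    show e * (c.1 * x.1) = c.1 * x.1
    rw [← mul_assoc, h1]⟩
  one_smul x := Subtype.ext (by
    show e * x.1 = x.1
    exact mem_leftPart.mp x.2)
  mul_smul a b x := Subtype.ext (by
    show (a.1 * b.1) * x.1 = a.1 * (b.1 * x.1)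
    rw [mul_assoc])
  smul_zero a := Subtype.ext (by
    show a.1 * 0 = 0
    exact mul_zero _)
  smul_add a x y := Subtype.ext (by
    show a.1 * (x.1 + y.1) = a.1 * x.1 + a.1 * y.1
    exact mul_add _ _ _)
  add_smul a b x := Subtype.ext (by
    show (a.1 + b.1) * x.1 = a.1 * x.1 + b.1 * x.1
    exact add_mul _ _ _)
  zero_smul x := Subtype.ext (by
    show (0 : T) * x.1 = 0
    exact zero_mul _)

/-- `Te` is a (unital) right module over the corner ring `eTe`, i.e. a module over
`(eTe)ᵐᵒᵖ`. -/
instance {e : T} {he : IsIdempotentElem e} : Module (Corner e he)ᵐᵒᵖ ↥(rightPart e) where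
  smul c x := ⟨x.1 * (unop c).1, by
    have h2 : (unop c).1 * e = (unop c).1 := (mem_cornerSubring.mp (unop c).2).2
    show (x.1 * (unop c).1) * e = x.1 * (unop c).1
    rw [mul_assoc, h2]⟩
  one_smul x := Subtype.ext (by
    show x.1 * e = x.1
    exact mem_rightPart.mp x.2)
  mul_smul a b x := Subtype.ext (by
    show x.1 * ((unop b).1 * (unop a).1) = (x.1 * (unop b).1) * (unop a).1
    rw [mul_assoc])
  smul_zero a := Subtype.ext (by
    show (0 : T) * (unop a).1 = 0
    exact zero_mul _)
  smul_add a x y := Subtype.ext (by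
    show (x.1 + y.1) * (unop a).1 = x.1 * (unop a).1 + y.1 * (unop a).1
    exact add_mul _ _ _)
  add_smul a b x := Subtype.ext (by
    show x.1 * ((unop a).1 + (unop b).1) = x.1 * (unop a).1 + x.1 * (unop b).1
    exact mul_add _ _ _)
  zero_smul x := Subtype.ext (by
    show x.1 * (0 : T) = 0
    exact mul_zero _)

/-- The hereditary side-transfer condition `HST`: for every idempotent `e` of `T`, if the
module `eT`/`Te` is summand-square-free as a right `eTe`-module (formalized on the carrier
`Te = rightPart e`, which carries the unital right `eTe`-action; at `e = 1` this is the right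
regular module `T_T`), then the left `eTe`-module (carrier `eT = leftPart e`, carrying the
unital left `eTe`-action; at `e = 1` this is the left regular module `_TT`) is square-free. -/
def HST (T : Type*) [Ring T] : Prop :=
  ∀ (e : T) (he : IsIdempotentElem e),
    IsSummandSquareFree (Corner e he)ᵐᵒᵖ ↥(rightPart e) →
      IsSquareFreeModule (Corner e he) ↥(leftPart e)

/-- The corner-stability axiom `CSA`: for every idempotent `e` of `T`, the left regular
module of the corner ring `eTe` is semi-weak-CS. -/
def CSAxiom (T : Type*) [Ring T] : Prop :=
  ∀ (e : T) (he : IsIdempotentElem e),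
    IsSemiWeakCS (Corner e he) (Corner e he)

end Corner

section SymmetryDatum

/-- A right-to-left symmetry datum on `R`: a ring decomposition `R ≅ S × T` where `S` is
semisimple artinian, the right regular module `T_T` is summand-square-free, the two ideals
`S`, `T` are orthogonal as right `R`-modules (no nonzero isomorphic right `R`-submodules),
and `T` satisfies `HST` and `CSA`. -/
structure RightToLeftSymmetryDatum (R S T : Type*) [Ring R] [Ring S] [Ring T] where
  iso : R ≃+* S × T
  semisimpleArtinian : IsSemisimpleRing S
  ssf : IsSummandSquareFree Tᵐᵒᵖ T
  orthogonal : ∀ A B : Submodule Rᵐᵒᵖ R,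
    (∀ a ∈ A, (iso a).2 = 0) → (∀ b ∈ B, (iso b).1 = 0) →
    A ≠ ⊥ → B ≠ ⊥ → IsEmpty (A ≃ₗ[Rᵐᵒᵖ] B)
  hst : HST T
  csa : CSAxiom T

end SymmetryDatum

section Beta

variable (R : Type*) [Ring R]

/-- The right annihilator `r_R(P) = {s : R | P s = 0}` of a right submodule `P` of `R`. -/
def rightAnnSet (P : Submodule Rᵐᵒᵖ R) : Set R := {s : R | ∀ p ∈ P, p * s = 0}

/-- The annihilator-bidual `β_r(P) = ℓ_R(r_R(P))`, as a right ideal of `R`. -/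
def betaR (P : Submodule Rᵐᵒᵖ R) : Submodule Rᵐᵒᵖ R where
  carrier := {r : R | ∀ s ∈ rightAnnSet R P, r * s = 0}
  add_mem' := by
    intro a b ha hb
    intro s hs
    rw [add_mul, ha s hs, hb s hs, add_zero]
  zero_mem' := by
    intro s hs
    exact zero_mul s
  smul_mem' := by
    intro c x hx s hs
    show (x * unop c) * s = 0
    rw [mul_assoc]
    refine hx _ ?_
    intro p hp
    rw [← mul_assoc]
    exact hs (p * unop c) (Submodule.smul_mem P c hp)

/-- A right ideal is a two-sided ideal which is a ring direct summand of `R` iff it is of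
the form `cR` for a central idempotent `c`. -/
def IsRingDirectSummandIdeal {R : Type*} [Ring R] (I : Submodule Rᵐᵒᵖ R) : Prop :=
  ∃ c : R, IsIdempotentElem c ∧ (∀ r : R, c * r = r * c) ∧ (∀ x : R, x ∈ I ↔ c * x = x)

/-- `R` has right semisimple annihilator asymmetry. -/
def HasRightSemisimpleAnnihilatorAsymmetry (R : Type*) [Ring R] : Prop :=
  ∃ P : Submodule Rᵐᵒᵖ R, IsSemisimpleModule Rᵐᵒᵖ P ∧ IsDirectSummand P ∧
    (¬ IsSemisimpleModule Rᵐᵒᵖ (betaR R P) ∨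
     (IsSemisimpleModule Rᵐᵒᵖ (betaR R P) ∧ ¬ IsRingDirectSummandIdeal (betaR R P)) ∨
     ¬ IsEssentialIn P (betaR R P))

end Beta

/-! Write `R = S × T`. The ideal `S × 0` is a direct summand of `R_R` with complement `0 × T`,
and every right ideal `K` splits as `K (1, 0) ⊕ K (0, 1)`. Both halves of "strongly C4*" pass to
such a summand `P`: C4* because submodules of `P` are submodules of `R`; semi-weak-CS because a
chain of triples in `P` is one in `R`, and if a summand `A` of `R` essentially contains its union,
then so does the summand `A ⊓ P` of `P`. The action of `R` on `S × 0` factors through the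
surjection `R → S`, so `S × 0` and `S_S` have the same submodules and homomorphisms: every notion
involved transfers along the bijective semilinear map `S × 0 → S`. For `T`, swap the factors. -/

open Function Submodule

section OrderIsoInvariance

variable {R M R' N : Type*} [Ring R] [AddCommGroup M] [Module R M]
  [Ring R'] [AddCommGroup N] [Module R' N]

theorem isDirectSummand_orderIso_iff (e : Submodule R M ≃o Submodule R' N)
    {X : Submodule R M} : IsDirectSummand (e X) ↔ IsDirectSummand X := by
  constructor
  · rintro ⟨K, hK⟩
    exact ⟨e.symm K, by simpa using e.symm.isCompl hK⟩
  · rintro ⟨K, hK⟩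
    exact ⟨e K, e.isCompl hK⟩

theorem isEssentialIn_orderIso_iff (e : Submodule R M ≃o Submodule R' N)
    {X A : Submodule R M} : IsEssentialIn (e X) (e A) ↔ IsEssentialIn X A := by
  simp only [IsEssentialIn, e.surjective.forall, e.le_iff_le, ne_eq, ← e.map_inf,
    map_eq_bot_iff]

theorem isSemisimpleModule_orderIso_iff (e : Submodule R M ≃o Submodule R' N) :
    IsSemisimpleModule R M ↔ IsSemisimpleModule R' N := by
  rw [isSemisimpleModule_iff, isSemisimpleModule_iff, e.complementedLattice_iff]

end OrderIsoInvariance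

section Semilinear

variable {R R' : Type*} [Ring R] [Ring R'] {φ : R →+* R'}
  {M N : Type*} [AddCommGroup M] [Module R M] [AddCommGroup N] [Module R' N]

theorem LinearMap.bijective_submoduleComap {f : M →ₛₗ[φ] N} (hf : Bijective f)
    (K : Submodule R' N) : Bijective (f.submoduleComap K) :=
  ⟨fun _ _ h => Subtype.ext (hf.injective (congrArg Subtype.val h)),
    f.submoduleComap_surjective_of_surjective K hf.surjective⟩

theorem isDirectSummand_comap_iff [RingHomSurjective φ] {f : M →ₛₗ[φ] N} (hf : Bijective f)
    {K : Submodule R' N} : IsDirectSummand (K.comap f) ↔ IsDirectSummand K :=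
  isDirectSummand_orderIso_iff (orderIsoMapComapOfBijective f hf).symm

variable {M₁ M₂ N₁ N₂ : Type*} [AddCommGroup M₁] [Module R M₁] [AddCommGroup M₂] [Module R M₂]
  [AddCommGroup N₁] [Module R' N₁] [AddCommGroup N₂] [Module R' N₂]

noncomputable def LinearMap.pullback (g : N₁ →ₗ[R'] N₂) (f₁ : M₁ →ₛₗ[φ] N₁)
    {f₂ : M₂ →ₛₗ[φ] N₂} (hf₂ : Bijective f₂) : M₁ →ₗ[R] M₂ where
  toFun x := (Equiv.ofBijective f₂ hf₂).symm (g (f₁ x))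
  map_add' x y := hf₂.injective <| by
    simp only [map_add, Equiv.ofBijective_apply_symm_apply]
  map_smul' r x := hf₂.injective <| by
    simp only [map_smulₛₗ, Equiv.ofBijective_apply_symm_apply, RingHom.id_apply]

@[simp]
theorem LinearMap.apply_pullback (g : N₁ →ₗ[R'] N₂) (f₁ : M₁ →ₛₗ[φ] N₁)
    {f₂ : M₂ →ₛₗ[φ] N₂} (hf₂ : Bijective f₂) (x : M₁) :
    f₂ (g.pullback f₁ hf₂ x) = g (f₁ x) :=
  Equiv.ofBijective_apply_symm_apply f₂ hf₂ _

theorem LinearMap.ker_pullback (g : N₁ →ₗ[R'] N₂) (f₁ : M₁ →ₛₗ[φ] N₁)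
    {f₂ : M₂ →ₛₗ[φ] N₂} (hf₂ : Bijective f₂) :
    ker (g.pullback f₁ hf₂) = (ker g).comap f₁ := by
  ext x
  rw [mem_ker, mem_comap, mem_ker, ← g.apply_pullback f₁ hf₂, map_eq_zero_iff _ hf₂.injective]

theorem LinearMap.range_pullback (g : N₁ →ₗ[R'] N₂) {f₁ : M₁ →ₛₗ[φ] N₁} (hf₁ : Surjective f₁)
    {f₂ : M₂ →ₛₗ[φ] N₂} (hf₂ : Bijective f₂) :
    range (g.pullback f₁ hf₂) = (range g).comap f₂ := by
  ext y
  simp only [mem_range, mem_comap]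
  constructor
  · rintro ⟨x, rfl⟩
    exact ⟨f₁ x, (g.apply_pullback f₁ hf₂ x).symm⟩
  · rintro ⟨x, hx⟩
    obtain ⟨x, rfl⟩ := hf₁ x
    exact ⟨x, hf₂.injective (by rw [apply_pullback, hx])⟩

noncomputable def LinearEquiv.pullback (e : N₁ ≃ₗ[R'] N₂) {f₁ : M₁ →ₛₗ[φ] N₁}
    (hf₁ : Bijective f₁) {f₂ : M₂ →ₛₗ[φ] N₂} (hf₂ : Bijective f₂) : M₁ ≃ₗ[R] M₂ :=
  LinearEquiv.ofLinearMap ((e : N₁ →ₗ[R'] N₂).pullback f₁ hf₂)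
    ((e.symm : N₂ →ₗ[R'] N₁).pullback f₂ hf₁)
    (LinearMap.ext fun y => hf₂.injective <| by simp)
    (LinearMap.ext fun x => hf₁.injective <| by simp)

@[simp]
theorem LinearEquiv.apply_pullback (e : N₁ ≃ₗ[R'] N₂) {f₁ : M₁ →ₛₗ[φ] N₁}
    (hf₁ : Bijective f₁) {f₂ : M₂ →ₛₗ[φ] N₂} (hf₂ : Bijective f₂) (x : M₁) :
    f₂ (e.pullback hf₁ hf₂ x) = e (f₁ x) :=
  (e : N₁ →ₗ[R'] N₂).apply_pullback f₁ hf₂ x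

end Semilinear

section BijectiveTransfer

variable {R R' : Type*} [Ring R] [Ring R'] {φ : R →+* R'} [RingHomSurjective φ]
  {M N : Type*} [AddCommGroup M] [Module R M] [AddCommGroup N] [Module R' N]
  {f : M →ₛₗ[φ] N}

theorem IsC4Module.of_bijective (hf : Bijective f) (h : IsC4Module R M) : IsC4Module R' N := by
  intro A B hAB g hker
  have hfA := f.bijective_submoduleComap hf A
  have hfB := f.bijective_submoduleComap hf B
  have hrange := h (A.comap f) (B.comap f) ((orderIsoMapComapOfBijective f hf).symm.isCompl hAB)
    (g.pullback (f.submoduleComap A) hfB)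
    (by rwa [LinearMap.ker_pullback, isDirectSummand_comap_iff hfA])
  rwa [LinearMap.range_pullback g hfA.surjective, isDirectSummand_comap_iff hfB] at hrange

theorem IsC4StarModule.of_bijective (hf : Bijective f) (h : IsC4StarModule R M) :
    IsC4StarModule R' N :=
  fun K => (h (K.comap f)).of_bijective (f.bijective_submoduleComap hf K)

noncomputable def SWTriple.comap (hf : Bijective f) (t : SWTriple R' N) : SWTriple R M where
  X := t.X.comap f
  Y := t.Y.comap f
  semisimpleX := (isSemisimpleModule_orderIso_iff
    (orderIsoMapComapOfBijective _ (f.bijective_submoduleComap hf t.X))).mpr t.semisimpleX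
  semisimpleY := (isSemisimpleModule_orderIso_iff
    (orderIsoMapComapOfBijective _ (f.bijective_submoduleComap hf t.Y))).mpr t.semisimpleY
  summandX := (isDirectSummand_comap_iff hf).mpr t.summandX
  summandY := (isDirectSummand_comap_iff hf).mpr t.summandY
  disj := by rw [← comap_inf, t.disj, comap_bot, LinearMap.ker_eq_bot_of_injective hf.injective]
  f := t.f.pullback (f.bijective_submoduleComap hf t.X) (f.bijective_submoduleComap hf t.Y)

theorem SWTriple.Extends.comap (hf : Bijective f) {t s : SWTriple R' N} (hts : t.Extends s) :
    (t.comap hf).Extends (s.comap hf) := by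
  obtain ⟨hX, hY, hfts⟩ := hts
  refine ⟨comap_mono hX, comap_mono hY, fun x => hf.injective ?_⟩
  have hs := congrArg Subtype.val (s.f.apply_pullback (f.bijective_submoduleComap hf s.X)
    (f.bijective_submoduleComap hf s.Y) ⟨x, comap_mono hX x.2⟩)
  have ht := congrArg Subtype.val (t.f.apply_pullback (f.bijective_submoduleComap hf t.X)
    (f.bijective_submoduleComap hf t.Y) x)
  simp only [LinearMap.submoduleComap_apply_coe] at hs ht
  exact hs.trans ((hfts ⟨f x, x.2⟩).trans ht.symm)

theorem IsSemiWeakCS.of_bijective (hf : Bijective f) (h : IsSemiWeakCS R M) :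
    IsSemiWeakCS R' N := by
  intro C hC
  let e := orderIsoMapComapOfBijective f hf
  obtain ⟨A, B, hA, hB, hXA, hYB⟩ :=
    h (SWTriple.comap hf '' C) (hC.image_of_map_rel _ _ _ fun _ _ => .comap hf)
  have hX : ⨆ t ∈ SWTriple.comap hf '' C, t.X = e.symm (⨆ t ∈ C, t.X) := by
    rw [iSup_image, map_iSup₂]
    rfl
  have hY : ⨆ t ∈ SWTriple.comap hf '' C, t.Y = e.symm (⨆ t ∈ C, t.Y) := by
    rw [iSup_image, map_iSup₂]
    rfl
  refine ⟨e A, e B, (isDirectSummand_orderIso_iff e).mpr hA,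
    (isDirectSummand_orderIso_iff e).mpr hB, ?_, ?_⟩
  · rw [← isEssentialIn_orderIso_iff e.symm, e.symm_apply_apply, ← hX]
    exact hXA
  · rw [← isEssentialIn_orderIso_iff e.symm, e.symm_apply_apply, ← hY]
    exact hYB

theorem IsStronglyC4StarModule.of_bijective (hf : Bijective f) (h : IsStronglyC4StarModule R M) :
    IsStronglyC4StarModule R' N :=
  ⟨h.1.of_bijective hf, h.2.of_bijective hf⟩

end BijectiveTransfer

section Summand

variable {R M : Type*} [Ring R] [AddCommGroup M] [Module R M] {P Q : Submodule R M}

theorem IsDirectSummand.map_subtype (hP : IsDirectSummand P) {X : Submodule R P}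
    (hX : IsDirectSummand X) : IsDirectSummand (X.map P.subtype) := by
  obtain ⟨Q, hPQ⟩ := hP
  obtain ⟨X', hXX'⟩ := hX
  refine ⟨X'.map P.subtype ⊔ Q,
    (disjoint_map P.injective_subtype hXX'.disjoint).isCompl_sup_right_of_isCompl_sup_left ?_⟩
  rwa [← Submodule.map_sup, hXX'.sup_eq_top, map_subtype_top]

theorem IsDirectSummand.comap_subtype {K : Submodule R M} (hK : IsDirectSummand K)
    (hKP : K ≤ P) : IsDirectSummand (K.comap P.subtype) := by
  obtain ⟨L, hKL⟩ := hK
  refine ⟨L.comap P.subtype, ?_⟩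
  have h := P.mapIic.symm.isCompl (Set.Iic.isCompl_inf_inf_of_isCompl_of_le hKL hKP)
  change IsCompl ((P ⊓ K).comap P.subtype) ((P ⊓ L).comap P.subtype) at h
  simpa only [comap_inf, comap_subtype_self, top_inf_eq] using h

theorem IsEssentialIn.of_le {X A B : Submodule R M} (h : IsEssentialIn X A) (hXB : X ≤ B)
    (hBA : B ≤ A) : IsEssentialIn X B :=
  ⟨hXB, fun K hKB => h.2 K (hKB.trans hBA)⟩

theorem IsEssentialIn.of_map {N : Type*} [AddCommGroup N] [Module R N] {f : M →ₗ[R] N}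
    (hf : Injective f) {X A : Submodule R M} (h : IsEssentialIn (X.map f) (A.map f)) :
    IsEssentialIn X A := by
  refine ⟨(map_le_map_iff_of_injective hf _ _).mp h.1, fun K hKA hK hXK => ?_⟩
  refine h.2 (K.map f) (map_mono hKA) (fun hKf => hK ?_)
    (by rw [← map_inf f hf, hXK, Submodule.map_bot])
  exact map_injective_of_injective hf (hKf.trans (Submodule.map_bot f).symm)

noncomputable def SWTriple.mapSubtype (hP : IsDirectSummand P) (t : SWTriple R P) :
    SWTriple R M where
  X := t.X.map P.subtype
  Y := t.Y.map P.subtype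
  semisimpleX := t.semisimpleX.congr (equivMapOfInjective _ P.injective_subtype t.X).symm
  semisimpleY := t.semisimpleY.congr (equivMapOfInjective _ P.injective_subtype t.Y).symm
  summandX := hP.map_subtype t.summandX
  summandY := hP.map_subtype t.summandY
  disj := by rw [← map_inf _ P.injective_subtype, t.disj, Submodule.map_bot]
  f := ((equivMapOfInjective _ P.injective_subtype t.X).symm.trans t.f).trans
    (equivMapOfInjective _ P.injective_subtype t.Y)

theorem SWTriple.Extends.mapSubtype (hP : IsDirectSummand P) {t s : SWTriple R P}
    (hts : t.Extends s) : (t.mapSubtype hP).Extends (s.mapSubtype hP) := by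
  obtain ⟨hX, hY, hfts⟩ := hts
  refine ⟨map_mono hX, map_mono hY, ?_⟩
  intro x
  obtain ⟨y, rfl⟩ := (equivMapOfInjective _ P.injective_subtype t.X).surjective x
  let eX := fun X : Submodule R P => equivMapOfInjective _ P.injective_subtype X
  show ((s.f ((eX s.X).symm (eX s.X ⟨y, hX y.2⟩)) : P) : M) =
    ((t.f ((eX t.X).symm (eX t.X y)) : P) : M)
  rw [LinearEquiv.symm_apply_apply, LinearEquiv.symm_apply_apply]
  exact congrArg Subtype.val (hfts y)

theorem exists_isDirectSummand_isEssentialIn_of_isCompl (hPQ : IsCompl P Q) {A : Submodule R M}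
    (hA : IsDirectSummand A) (hsplit : A ⊓ P ⊔ A ⊓ Q = A) {X : Submodule R P}
    (hXA : IsEssentialIn (X.map P.subtype) A) :
    ∃ A' : Submodule R P, IsDirectSummand A' ∧ IsEssentialIn X A' := by
  obtain ⟨C, hAC⟩ := hA
  have hAP : IsDirectSummand (A ⊓ P) :=
    ⟨A ⊓ Q ⊔ C, (hPQ.disjoint.mono inf_le_right inf_le_right).isCompl_sup_right_of_isCompl_sup_left
      (by rwa [hsplit])⟩
  refine ⟨(A ⊓ P).comap P.subtype, hAP.comap_subtype inf_le_right,
    IsEssentialIn.of_map P.injective_subtype ?_⟩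
  rw [map_comap_subtype]
  exact hXA.of_le (le_inf (map_subtype_le P X) (le_inf hXA.1 (map_subtype_le P X)))
    (inf_le_right.trans inf_le_left)

theorem IsSemiWeakCS.of_isCompl (hPQ : IsCompl P Q)
    (hsplit : ∀ A : Submodule R M, IsDirectSummand A → A ⊓ P ⊔ A ⊓ Q = A)
    (h : IsSemiWeakCS R M) : IsSemiWeakCS R P := by
  intro C hC
  have hP : IsDirectSummand P := ⟨Q, hPQ⟩
  obtain ⟨A, B, hA, hB, hXA, hYB⟩ :=
    h (SWTriple.mapSubtype hP '' C) (hC.image_of_map_rel _ _ _ fun _ _ => .mapSubtype hP)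
  rw [iSup_image] at hXA hYB
  simp only [SWTriple.mapSubtype, ← Submodule.map_iSup] at hXA hYB
  obtain ⟨A', hA', hXA'⟩ :=
    exists_isDirectSummand_isEssentialIn_of_isCompl hPQ hA (hsplit A hA) hXA
  obtain ⟨B', hB', hYB'⟩ :=
    exists_isDirectSummand_isEssentialIn_of_isCompl hPQ hB (hsplit B hB) hYB
  exact ⟨A', B', hA', hB', hXA', hYB'⟩

theorem IsC4StarModule.submodule (h : IsC4StarModule R M) (P : Submodule R M) :
    IsC4StarModule R P := fun Q =>
  (h (Q.map P.subtype)).of_bijective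
    (f := ((equivMapOfInjective _ P.injective_subtype Q).symm : _ →ₗ[R] Q))
    (LinearEquiv.bijective _)

theorem IsStronglyC4StarModule.of_isCompl (hPQ : IsCompl P Q)
    (hsplit : ∀ A : Submodule R M, IsDirectSummand A → A ⊓ P ⊔ A ⊓ Q = A)
    (h : IsStronglyC4StarModule R M) : IsStronglyC4StarModule R P :=
  ⟨h.1.of_isCompl hPQ hsplit, h.2.submodule P⟩

end Summand

section Product

variable (S T : Type*) [Ring S] [Ring T]

def rightRegularFst : S × T →ₛₗ[RingHom.op (RingHom.fst S T)] S where
  toFun := Prod.fst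
  map_add' _ _ := rfl
  map_smul' _ _ := rfl

def rightRegularSnd : S × T →ₛₗ[RingHom.op (RingHom.snd S T)] T where
  toFun := Prod.snd
  map_add' _ _ := rfl
  map_smul' _ _ := rfl

theorem isCompl_ker_rightRegularSnd_ker_rightRegularFst :
    IsCompl (LinearMap.ker (rightRegularSnd S T)) (LinearMap.ker (rightRegularFst S T)) := by
  constructor
  · rw [disjoint_iff, eq_bot_iff]
    rintro x ⟨hx₂, hx₁⟩
    exact (mem_bot _).mpr (Prod.ext hx₁ hx₂)
  · rw [codisjoint_iff, eq_top_iff]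
    rintro x -
    exact mem_sup.mpr ⟨(x.1, 0), rfl, (0, x.2), rfl, Prod.ext (add_zero x.1) (zero_add x.2)⟩

theorem inf_ker_rightRegularSnd_sup_inf_ker_rightRegularFst
    (K : Submodule (S × T)ᵐᵒᵖ (S × T)) :
    K ⊓ LinearMap.ker (rightRegularSnd S T) ⊔ K ⊓ LinearMap.ker (rightRegularFst S T) = K := by
  refine le_antisymm (sup_le inf_le_left inf_le_left) fun x hx => mem_sup.mpr ?_
  refine ⟨(x.1, 0), ⟨?_, rfl⟩, (0, x.2), ⟨?_, rfl⟩, Prod.ext (add_zero x.1) (zero_add x.2)⟩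
  · rw [← show x * ((1 : S), (0 : T)) = (x.1, 0) from Prod.ext (mul_one x.1) (mul_zero x.2)]
    exact K.smul_mem (op _) hx
  · rw [← show x * ((0 : S), (1 : T)) = (0, x.2) from Prod.ext (mul_zero x.1) (mul_one x.2)]
    exact K.smul_mem (op _) hx

theorem bijective_rightRegularFst_domRestrict :
    Bijective ((rightRegularFst S T).domRestrict (LinearMap.ker (rightRegularSnd S T))) := by
  refine ⟨fun x y hxy => Subtype.ext (Prod.ext hxy ?_), fun s => ⟨⟨(s, 0), rfl⟩, rfl⟩⟩
  exact x.2.trans y.2.symm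

variable {S T}

theorem IsStronglyRightC4StarRing.fst (h : IsStronglyRightC4StarRing (S × T)) :
    IsStronglyRightC4StarRing S := by
  have : RingHomSurjective (RingHom.op (RingHom.fst S T)) := ⟨fun s => ⟨op (unop s, 0), rfl⟩⟩
  have hP : IsStronglyC4StarModule (S × T)ᵐᵒᵖ (LinearMap.ker (rightRegularSnd S T)) :=
    IsStronglyC4StarModule.of_isCompl (isCompl_ker_rightRegularSnd_ker_rightRegularFst S T)
      (fun A _ => inf_ker_rightRegularSnd_sup_inf_ker_rightRegularFst S T A) h
  exact IsStronglyC4StarModule.of_bijective (bijective_rightRegularFst_domRestrict S T) hP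

end Product

theorem IsStronglyRightC4StarRing.of_ringEquiv {R R' : Type*} [Ring R] [Ring R'] (e : R ≃+* R')
    (h : IsStronglyRightC4StarRing R) : IsStronglyRightC4StarRing R' := by
  have : RingHomSurjective (RingHom.op (e : R →+* R')) :=
    ⟨fun r => ⟨op (e.symm (unop r)), by simp⟩⟩
  let f : R →ₛₗ[RingHom.op (e : R →+* R')] R' :=
    { toFun := e
      map_add' := e.map_add
      map_smul' := fun r x => e.map_mul x (unop r) }
  exact IsStronglyC4StarModule.of_bijective (f := f) e.bijective h

/-- If the direct product `R = S × T` is a strongly right `C4*`-ring, then both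
`S` and `T` are strongly right `C4*`-rings. -/
theorem right_factor_inheritance_strong {S T : Type*} [Ring S] [Ring T]
    (h : IsStronglyRightC4StarRing (S × T)) :
    IsStronglyRightC4StarRing S ∧ IsStronglyRightC4StarRing T :=
  ⟨h.fst, (h.of_ringEquiv RingEquiv.prodComm).fst⟩
end

section
/- Let R be a strongly right C4*-ring admitting a right-to-left symmetry datum R = Σ × T, and fix n ≥ 1. If the matrix ring M_n(T) has summand-square-free right regular module and satisfies the hereditary side-transfer condition HST and the corner-stability axiom CSA, then the matrix ring M_n(R) is a strongly left C4*-ring. -/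
open MulOpposite

/-!
Let `c` be the central idempotent of `Mₙ(R) ≅ Mₙ(S) × Mₙ(T)` cutting out the first factor, so that
every left module splits as `cM ⊕ (1 - c)M`. In the regular module, `cQ ≅ Mₙ(S)` is semisimple,
and `(1 - c)Q ≅ Mₙ(T)` is square-free: `HST` at the idempotent `1` turns right
summand-square-freeness of `Mₙ(T)` into left square-freeness. If `U ≅ V` are disjoint submodules,
the isomorphism restricts to `(1 - c)U ≅ (1 - c)V`, which must vanish, so `U, V ⊆ cQ`. This applies
to the triples `(X, Y, f)` of `S(M)` and to `K ≅ f(K)` for a complement `K` of `ker f`; everything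
then happens inside the semisimple summand `cQ`, where every submodule is a direct summand.
-/

section SemilinearTransfer

open Function

variable {R S : Type*} [Ring R] [Ring S] {σ : R →+* S} [RingHomSurjective σ]
  {M N : Type*} [AddCommGroup M] [Module R M] [AddCommGroup N] [Module S N]

theorem nonempty_linearEquiv_of_bijective {M₁ M₂ N₁ N₂ : Type*}
    [AddCommGroup M₁] [Module R M₁] [AddCommGroup M₂] [Module R M₂]
    [AddCommGroup N₁] [Module S N₁] [AddCommGroup N₂] [Module S N₂]
    (l₁ : M₁ →ₛₗ[σ] N₁) (hl₁ : Bijective l₁) (l₂ : M₂ →ₛₗ[σ] N₂) (hl₂ : Bijective l₂)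
    (e : M₁ ≃ₗ[R] M₂) : Nonempty (N₁ ≃ₗ[S] N₂) := by
  let l := Equiv.ofBijective l₁ hl₁
  have hl : ∀ x, l.symm (l₁ x) = x := l.symm_apply_apply
  let g : N₁ →ₗ[S] N₂ :=
    { toFun y := l₂ (e (l.symm y))
      map_add' y y' := by
        obtain ⟨x, rfl⟩ := hl₁.2 y
        obtain ⟨x', rfl⟩ := hl₁.2 y'
        rw [← map_add, hl, hl, hl, map_add, map_add]
      map_smul' s y := by
        obtain ⟨r, rfl⟩ := σ.surjective s
        obtain ⟨x, rfl⟩ := hl₁.2 y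
        rw [← LinearMap.map_smulₛₗ, hl, hl, map_smul, LinearMap.map_smulₛₗ, RingHom.id_apply] }
  exact ⟨LinearEquiv.ofBijective g (hl₂.comp (e.bijective.comp l.symm.bijective))⟩

theorem nonempty_map_linearEquiv_of_bijective (l : M →ₛₗ[σ] N) (hl : Bijective l)
    {A B : Submodule R M} (e : A ≃ₗ[R] B) : Nonempty (A.map l ≃ₗ[S] B.map l) :=
  nonempty_linearEquiv_of_bijective
    _ ⟨l.submoduleMap_injective hl.1 A, l.submoduleMap_surjective A⟩
    _ ⟨l.submoduleMap_injective hl.1 B, l.submoduleMap_surjective B⟩ e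

theorem IsSquareFreeModule.of_bijective (l : M →ₛₗ[σ] N) (hl : Bijective l)
    (h : IsSquareFreeModule S N) : IsSquareFreeModule R M := by
  intro A B hA hB hAB
  let Φ := Submodule.orderIsoMapComapOfBijective l hl
  refine ⟨fun e => (h (Φ A) (Φ B) ?_ ?_ ?_).false (nonempty_map_linearEquiv_of_bijective l hl e).some⟩
  · simpa using hA
  · simpa using hB
  · rw [← Φ.map_inf, hAB, Φ.map_bot]

theorem IsSummandSquareFree.of_bijective (l : M →ₛₗ[σ] N) (hl : Bijective l)
    (h : IsSummandSquareFree S N) : IsSummandSquareFree R M := by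
  rintro A B ⟨A', hA'⟩ ⟨B', hB'⟩ hA hB hAB
  let Φ := Submodule.orderIsoMapComapOfBijective l hl
  refine ⟨fun e => (h (Φ A) (Φ B) ⟨_, Φ.isCompl hA'⟩ ⟨_, Φ.isCompl hB'⟩ ?_ ?_ ?_).false
    (nonempty_map_linearEquiv_of_bijective l hl e).some⟩
  · simpa using hA
  · simpa using hB
  · rw [← Φ.map_inf, hAB, Φ.map_bot]

end SemilinearTransfer

section Summands

variable {R M : Type*} [Ring R] [AddCommGroup M] [Module R M]

theorem IsSquareFreeModule.subsingleton_of_injective {P : Type*} [AddCommGroup P] [Module R P]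
    (h : IsSquareFreeModule R M) (i j : P →ₗ[R] M) (hi : Function.Injective i)
    (hj : Function.Injective j) (hij : Disjoint (LinearMap.range i) (LinearMap.range j)) :
    Subsingleton P := by
  by_contra hP
  rw [not_subsingleton_iff_nontrivial] at hP
  have hne : ∀ f : P →ₗ[R] M, Function.Injective f → LinearMap.range f ≠ ⊥ := fun f hf => by
    rw [Ne, LinearMap.range_eq_bot]
    exact LinearMap.ne_zero_of_injective hf
  exact (h _ _ (hne i hi) (hne j hj) hij.eq_bot).false
    ((LinearEquiv.ofInjective i hi).symm.trans (LinearEquiv.ofInjective j hj))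

theorem IsDirectSummand.of_le {J X : Submodule R M} (hJ : IsDirectSummand J)
    [IsSemisimpleModule R J] (hXJ : X ≤ J) : IsDirectSummand X := by
  obtain ⟨B, hJB⟩ := hJ
  have : ComplementedLattice (Set.Iic J) :=
    J.mapIic.complementedLattice_iff.mp IsSemisimpleModule.toComplementedLattice
  obtain ⟨W, hW⟩ := exists_isCompl (⟨X, hXJ⟩ : Set.Iic J)
  rw [Set.Iic.isCompl_iff] at hW
  rw [← hW.2] at hJB
  exact ⟨W ⊔ B, hW.1.isCompl_sup_right_of_isCompl_sup_left hJB⟩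

theorem isEssentialIn_self (X : Submodule R M) : IsEssentialIn X X :=
  ⟨le_rfl, fun N hN hN0 => by rwa [inf_eq_right.mpr hN]⟩

end Summands

section CentralIdempotent

open LinearMap Module Module.End

variable {Q M : Type*} [Ring Q] [AddCommGroup M] [Module Q M] {c : Q} (hc : c ∈ Set.center Q)

theorem isIdempotentElem_smulLeft (hcc : IsIdempotentElem c) :
    IsIdempotentElem (smulLeft c hc : End Q M) := by
  ext m
  simp [smul_smul, hcc.eq]

theorem mem_range_smulLeft (hcc : IsIdempotentElem c) {m : M} :
    m ∈ range (smulLeft c hc : End Q M) ↔ c • m = m :=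
  (isIdempotentElem_smulLeft hc hcc).mem_range_iff

theorem range_le_range_smulLeft (hcc : IsIdempotentElem c) {P : Type*} [AddCommGroup P]
    [Module Q P] (f : P →ₗ[Q] M) (h : ∀ x : P, c • x = x) :
    range f ≤ range (smulLeft c hc : End Q M) := by
  rintro _ ⟨x, rfl⟩
  rw [mem_range_smulLeft hc hcc, ← map_smul, h]

theorem isSemisimpleModule_range_smulLeft_of_injective (hcc : IsIdempotentElem c)
    {M' : Type*} [AddCommGroup M'] [Module Q M'] (g : M' →ₗ[Q] M) (hg : Function.Injective g)
    (hss : IsSemisimpleModule Q (range (smulLeft c hc : End Q M))) :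
    IsSemisimpleModule Q (range (smulLeft c hc : End Q M')) :=
  IsSemisimpleModule.of_injective
    (g.restrict fun x hx => by rw [mem_range_smulLeft hc hcc] at hx ⊢; rw [← map_smul, hx])
    fun _ _ h => Subtype.ext (hg (congrArg Subtype.val h))

theorem smul_eq_self_of_disjoint_range (hcc : IsIdempotentElem c)
    (hsf : IsSquareFreeModule Q (ker (smulLeft c hc : End Q M)))
    {P : Type*} [AddCommGroup P] [Module Q P] (i j : P →ₗ[Q] M) (hi : Function.Injective i)
    (hj : Function.Injective j) (hij : Disjoint (range i) (range j)) (x : P) : c • x = x := by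
  let K := ker (smulLeft c hc : End Q P)
  have hK : ∀ f : P →ₗ[Q] M, ∀ y ∈ K, f y ∈ ker (smulLeft c hc : End Q M) := fun f y hy => by
    simp_all [← map_smul, K]
  have : Subsingleton K := hsf.subsingleton_of_injective (i.restrict (hK i)) (j.restrict (hK j))
    (fun _ _ h => Subtype.ext (hi (congrArg Subtype.val h)))
    (fun _ _ h => Subtype.ext (hj (congrArg Subtype.val h))) <| by
      rw [Submodule.disjoint_def]
      rintro _ ⟨a, rfl⟩ ⟨b, hb⟩
      exact Subtype.ext (Submodule.disjoint_def.mp hij _ ⟨a, rfl⟩ ⟨b, congrArg Subtype.val hb⟩)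
  have hx : x - c • x ∈ K := by simp [K, smul_sub, smul_smul, hcc.eq]
  exact (sub_eq_zero.mp (congrArg Subtype.val (Subsingleton.elim (⟨_, hx⟩ : K) 0))).symm

theorem isDirectSummand_range_smulLeft (hcc : IsIdempotentElem c) :
    IsDirectSummand (range (smulLeft c hc : End Q M)) :=
  ⟨_, (isIdempotentElem_smulLeft hc hcc).isCompl⟩

theorem SWTriple.le_range_smulLeft (hcc : IsIdempotentElem c)
    (hsf : IsSquareFreeModule Q (ker (smulLeft c hc : End Q M))) (t : SWTriple Q M) :
    t.X ≤ range (smulLeft c hc : End Q M) ∧ t.Y ≤ range (smulLeft c hc : End Q M) := by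
  have hY : range (t.Y.subtype ∘ₗ t.f.toLinearMap) = t.Y := by
    rw [range_comp, LinearEquiv.range, Submodule.map_top, Submodule.range_subtype]
  have h := smul_eq_self_of_disjoint_range hc hcc hsf t.X.subtype
    (t.Y.subtype ∘ₗ t.f.toLinearMap) t.X.injective_subtype
    (t.Y.injective_subtype.comp t.f.injective)
    (by rw [hY, Submodule.range_subtype]; exact disjoint_iff.mpr t.disj)
  constructor
  · simpa only [Submodule.range_subtype] using range_le_range_smulLeft hc hcc t.X.subtype h
  · simpa only [hY] using range_le_range_smulLeft hc hcc (t.Y.subtype ∘ₗ t.f.toLinearMap) h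

theorem isSemiWeakCS_of_smulLeft (hcc : IsIdempotentElem c)
    (hss : IsSemisimpleModule Q (range (smulLeft c hc : End Q M)))
    (hsf : IsSquareFreeModule Q (ker (smulLeft c hc : End Q M))) : IsSemiWeakCS Q M := by
  intro C _
  have hJ := isDirectSummand_range_smulLeft (M := M) hc hcc
  exact ⟨_, _, hJ.of_le (iSup₂_le fun t _ => (t.le_range_smulLeft hc hcc hsf).1),
    hJ.of_le (iSup₂_le fun t _ => (t.le_range_smulLeft hc hcc hsf).2),
    isEssentialIn_self _, isEssentialIn_self _⟩

theorem isC4StarModule_of_smulLeft (hcc : IsIdempotentElem c)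
    (hss : IsSemisimpleModule Q (range (smulLeft c hc : End Q M)))
    (hsf : IsSquareFreeModule Q (ker (smulLeft c hc : End Q M))) : IsC4StarModule Q M := by
  intro N A B hAB f ⟨K, hK⟩
  have hfK : Function.Injective (f ∘ₗ K.subtype) := (injective_iff_map_eq_zero _).mpr
    fun x hx => Subtype.ext (Submodule.disjoint_def.mp hK.disjoint x hx x.2)
  have hrange : range f = range (f ∘ₗ K.subtype) := by
    rw [range_comp, Submodule.range_subtype]
    refine le_antisymm ?_ map_le_range
    rw [range_eq_map, LinearMap.map_le_map_iff, sup_comm, hK.codisjoint.eq_top]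
  let ιA := N.subtype ∘ₗ A.subtype
  let ιB := N.subtype ∘ₗ B.subtype
  have hιB : Function.Injective ιB := N.injective_subtype.comp B.injective_subtype
  have hi : Function.Injective (ιA ∘ₗ K.subtype) :=
    N.injective_subtype.comp (A.injective_subtype.comp K.injective_subtype)
  have hj : Function.Injective (ιB ∘ₗ f ∘ₗ K.subtype) := hιB.comp hfK
  have hdisj : Disjoint (range (ιA ∘ₗ K.subtype)) (range (ιB ∘ₗ f ∘ₗ K.subtype)) := by
    rw [Submodule.disjoint_def]
    rintro _ ⟨a, rfl⟩ ⟨b, hb⟩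
    have : ((a : A) : N) = f b := N.injective_subtype hb.symm
    have h0 := Submodule.disjoint_def.mp hAB.disjoint _ (a : A).2 (this ▸ (f b).2)
    simp [ιA, h0]
  have hfix := smul_eq_self_of_disjoint_range (P := K) hc hcc hsf _ _ hi hj hdisj
  have hsub : range f ≤ range (smulLeft c hc : End Q B) := by
    rw [hrange]
    exact range_le_range_smulLeft (P := K) hc hcc (f ∘ₗ K.subtype) hfix
  have := isSemisimpleModule_range_smulLeft_of_injective hc hcc ιB hιB hss
  exact (isDirectSummand_range_smulLeft hc hcc).of_le hsub

theorem isStronglyC4StarModule_of_smulLeft (hcc : IsIdempotentElem c)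
    (hss : IsSemisimpleModule Q (range (smulLeft c hc : End Q M)))
    (hsf : IsSquareFreeModule Q (ker (smulLeft c hc : End Q M))) : IsStronglyC4StarModule Q M :=
  ⟨isSemiWeakCS_of_smulLeft hc hcc hss hsf, isC4StarModule_of_smulLeft hc hcc hss hsf⟩

end CentralIdempotent

section RingProduct

open LinearMap Module Module.End Function

variable {Q S T : Type*} [Ring Q] [Ring S] [Ring T]

theorem exists_bijective_range_smulLeft (π : Q →+* S) (hπ : Surjective π) {e : Q}
    (he : e ∈ Set.center Q) (hee : IsIdempotentElem e) (h1 : π e = 1)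
    (hker : ∀ x, π x = 0 → e * x = 0) :
    ∃ l : range (smulLeft e he : End Q Q) →ₛₗ[π] S, Bijective l := by
  let l : range (smulLeft e he : End Q Q) →ₛₗ[π] S :=
    { toFun x := π (x : Q)
      map_add' x y := map_add π (x : Q) y
      map_smul' q x := map_mul π q (x : Q) }
  refine ⟨l, (injective_iff_map_eq_zero l).mpr fun x hx => ?_, fun s => ?_⟩
  · have hx' : e * x = x := (mem_range_smulLeft he hee).mp x.2
    exact Subtype.ext (hx'.symm.trans (hker x hx))
  · obtain ⟨q, rfl⟩ := hπ s
    refine ⟨⟨e * q, (mem_range_smulLeft he hee).mpr ?_⟩, ?_⟩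
    · rw [smul_eq_mul, ← mul_assoc, hee.eq]
    · show π (e * q) = π q
      rw [map_mul, h1, one_mul]

theorem isStronglyC4StarModule_self_of_ringEquiv_prod (Φ : Q ≃+* S × T) [IsSemisimpleRing S]
    (hT : IsSquareFreeModule T T) : IsStronglyC4StarModule Q Q := by
  set c := Φ.symm (1, 0)
  have hΦc : Φ c = (1, 0) := Φ.apply_symm_apply _
  have hc : c ∈ Set.center Q :=
    Semigroup.mem_center_iff.mpr fun x => Φ.injective (by simp [hΦc, Prod.ext_iff])
  have hc' : 1 - c ∈ Set.center Q := Semigroup.mem_center_iff.mpr fun x => by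
    rw [mul_sub, sub_mul, mul_one, one_mul, Semigroup.mem_center_iff.mp hc x]
  have hcc : IsIdempotentElem c := Φ.injective (by simp [hΦc])
  have hker : ker (smulLeft c hc : End Q Q) = range (smulLeft (1 - c) hc' : End Q Q) := by
    ext x
    rw [mem_range_smulLeft hc' hcc.one_sub, mem_ker, smulLeft_apply, sub_smul, one_smul,
      sub_eq_self]
  let π₁ := (RingHom.fst S T).comp (Φ : Q →+* S × T)
  let π₂ := (RingHom.snd S T).comp (Φ : Q →+* S × T)
  have : RingHomSurjective π₁ := ⟨Prod.fst_surjective.comp Φ.surjective⟩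
  have : RingHomSurjective π₂ := ⟨Prod.snd_surjective.comp Φ.surjective⟩
  obtain ⟨l₁, hl₁⟩ := exists_bijective_range_smulLeft π₁ π₁.surjective hc hcc
    (by simp [π₁, hΦc]) fun x hx => Φ.injective (by simp_all [π₁, Prod.ext_iff])
  obtain ⟨l₂, hl₂⟩ := exists_bijective_range_smulLeft π₂ π₂.surjective hc' hcc.one_sub
    (by simp [π₂, hΦc]) fun x hx => Φ.injective (by simp_all [π₂, Prod.ext_iff, sub_mul])
  refine isStronglyC4StarModule_of_smulLeft hc hcc
    ((l₁.isSemisimpleModule_iff_of_bijective hl₁).mpr inferInstance) ?_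
  rw [hker]
  exact hT.of_bijective l₂ hl₂

end RingProduct

def Matrix.prodRingEquiv (n S T : Type*) [Fintype n] [DecidableEq n] [Ring S] [Ring T] :
    Matrix n n (S × T) ≃+* Matrix n n S × Matrix n n T where
  toFun M := (M.map Prod.fst, M.map Prod.snd)
  invFun P := Matrix.of fun i j => (P.1 i j, P.2 i j)
  left_inv _ := rfl
  right_inv _ := rfl
  map_mul' M N := by ext <;> simp [Matrix.mul_apply, Prod.fst_sum, Prod.snd_sum]
  map_add' _ _ := rfl

section CornerOne

variable {T : Type*} [Ring T]

def cornerOneRingEquiv : T ≃+* Corner (1 : T) .one where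
  toFun x := ⟨x, one_mul x, mul_one x⟩
  invFun x := x.1
  left_inv _ := rfl
  right_inv _ := rfl
  map_mul' _ _ := rfl
  map_add' _ _ := rfl

theorem isSquareFreeModule_self_of_hst (hhst : HST T) (hssf : IsSummandSquareFree Tᵐᵒᵖ T) :
    IsSquareFreeModule T T := by
  let σ : (Corner (1 : T) .one)ᵐᵒᵖ →+* Tᵐᵒᵖ := (RingEquiv.op cornerOneRingEquiv.symm).toRingHom
  have : RingHomSurjective σ := ⟨(RingEquiv.op cornerOneRingEquiv.symm).surjective⟩
  let r : rightPart (1 : T) →ₛₗ[σ] T :=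
    { toFun x := x.1
      map_add' _ _ := rfl
      map_smul' _ _ := rfl }
  let τ : T →+* Corner (1 : T) .one := cornerOneRingEquiv.toRingHom
  have : RingHomSurjective τ := ⟨cornerOneRingEquiv.surjective⟩
  let l : T →ₛₗ[τ] leftPart (1 : T) :=
    { toFun x := ⟨x, one_mul x⟩
      map_add' _ _ := rfl
      map_smul' _ _ := rfl }
  refine .of_bijective l ⟨fun _ _ h => congrArg Subtype.val h, fun y => ⟨y.1, rfl⟩⟩ (hhst 1 .one ?_)
  exact .of_bijective r ⟨fun _ _ h => Subtype.ext h, fun x => ⟨⟨x, mul_one x⟩, rfl⟩⟩ hssf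

end CornerOne

theorem matrix_transfer_general {R S T : Type*} [Ring R] [Ring S] [Ring T]
    (d : RightToLeftSymmetryDatum R S T)
    (n : ℕ)
    (hssf : IsSummandSquareFree (Matrix (Fin n) (Fin n) T)ᵐᵒᵖ (Matrix (Fin n) (Fin n) T))
    (hhst : HST (Matrix (Fin n) (Fin n) T)) :
    IsStronglyLeftC4StarRing (Matrix (Fin n) (Fin n) R) := by
  have := d.semisimpleArtinian
  exact isStronglyC4StarModule_self_of_ringEquiv_prod
    (d.iso.mapMatrix.trans (Matrix.prodRingEquiv (Fin n) S T))
    (isSquareFreeModule_self_of_hst hhst hssf)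

/-- Let `R` be a strongly right `C4*`-ring with a right-to-left symmetry datum
`R ≅ S × T`, and fix `n ≥ 1`. If the matrix ring `Mₙ(T)` has summand-square-free right
regular module and satisfies `HST` and `CSA`, then `Mₙ(R)` is a strongly left
`C4*`-ring. -/
theorem matrix_transfer {R S T : Type*} [Ring R] [Ring S] [Ring T]
    (h : IsStronglyRightC4StarRing R)
    (d : RightToLeftSymmetryDatum R S T)
    (n : ℕ) (hn : 1 ≤ n)
    (hssf : IsSummandSquareFree (Matrix (Fin n) (Fin n) T)ᵐᵒᵖ (Matrix (Fin n) (Fin n) T))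
    (hhst : HST (Matrix (Fin n) (Fin n) T))
    (hcsa : CSAxiom (Matrix (Fin n) (Fin n) T)) :
    IsStronglyLeftC4StarRing (Matrix (Fin n) (Fin n) R) :=
  matrix_transfer_general d n hssf hhst
end
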